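/- arXiv:2507.05055 — 2 statements merged into one kernel-verified Lean document; each statement's English description precedes it below -/
import Mathlib

section
/- For every integer L ≥ 0, the number of RSF layouts on L qubits equals T(L), the number of partial matchings of an L-element set; that is, there is a bijection between RSF layouts on L qubits and partial matchings of {1,…,L}. -/
/-- Telephone (involution) numbers: `T 0 = T 1 = 1`, `T (n+2) = T (n+1) + (n+1) * T n`. -/
def telephone : ℕ → ℕ
  | 0 => 1
  | 1 => 1
  | n + 2 => telephone (n + 1) + (n + 1) * telephone n

/-- A partial matching of `{1,…,L}`: a set of pairwise disjoint two-element
subsets of `{1,…,L}`. -/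
def IsPartialMatching (L : ℕ) (D : Finset (Finset ℕ)) : Prop :=
  (∀ e ∈ D, e.card = 2) ∧ (∀ e ∈ D, e ⊆ Finset.Icc 1 L) ∧
    ∀ e ∈ D, ∀ f ∈ D, e ≠ f → Disjoint e f

/-- An RSF (right standard form) layout on `L` qubits: a finite sequence
`((k_1,l_1),…,(k_n,l_n))` (possibly empty) of pairs of positive integers with
`k_i + 2 ≤ k_{i+1}` for consecutive entries and `1 ≤ l_i ≤ L - k_i` for each entry. -/
def IsRSF (L : ℕ) (s : List (ℕ × ℕ)) : Prop :=
  (∀ p ∈ s, 1 ≤ p.1 ∧ 1 ≤ p.2 ∧ p.2 ≤ L - p.1) ∧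
    s.Chain' fun p q => p.1 + 2 ≤ q.1

/-- The number of RSF layouts on `L` qubits. -/
noncomputable def numRSF (L : ℕ) : ℕ :=
  Nat.card {s : List (ℕ × ℕ) // IsRSF L s}

/-! Both sides satisfy the recurrence `T (L + 2) = T (L + 1) + (L + 1) T L`.
An RSF layout on `L + 2` qubits either has no entry at qubit `1`, and is then a layout on
qubits `2, …, L + 2`, or starts with `(1, l)` for one of the `L + 1` values of `l`, followed by
a layout on qubits `3, …, L + 2`. A partial matching of an `(n + 2)`-set either leaves a chosen
point `a` unmatched, or pairs it with one of the `n + 1` other points and matches the remaining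
`n`. -/

open Finset

theorem telephone_pos : ∀ n, 0 < telephone n
  | 0 | 1 => Nat.one_pos
  | n + 2 => Nat.add_pos_left (telephone_pos (n + 1)) _

theorem finite_of_card_eq_telephone {β : Type*} {n : ℕ} (h : Nat.card β = telephone n) :
    Finite β :=
  Nat.finite_of_card_ne_zero (h.trans_ne (telephone_pos n).ne')

section Matchings

variable {α : Type*}

def IsMatchingOn (S : Finset α) (D : Finset (Finset α)) : Prop :=
  (∀ e ∈ D, e ⊆ S) ∧ (∀ e ∈ D, #e = 2) ∧ (D : Set (Finset α)).Pairwise Disjoint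

open scoped Classical in
noncomputable def matchings (S : Finset α) : Finset (Finset (Finset α)) :=
  {D ∈ S.powerset.powerset | IsMatchingOn S D}

theorem mem_matchings {S : Finset α} {D : Finset (Finset α)} :
    D ∈ matchings S ↔ IsMatchingOn S D := by
  simp only [matchings, mem_filter, mem_powerset, and_iff_right_iff_imp]
  exact fun hD e he => mem_powerset.mpr (hD.1 e he)

theorem matchings_of_card_le_one {S : Finset α} (hS : #S ≤ 1) : matchings S = {∅} := by
  ext D
  rw [mem_matchings, mem_singleton]
  constructor
  · refine fun ⟨hsub, hcard, _⟩ => eq_empty_of_forall_notMem fun e he => ?_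
    have := card_le_card (hsub e he)
    have := hcard e he
    omega
  · rintro rfl
    simp [IsMatchingOn]

variable [DecidableEq α]

theorem IsMatchingOn.erase {S e : Finset α} {D : Finset (Finset α)} (hD : IsMatchingOn S D)
    (he : e ∈ D) : IsMatchingOn (S \ e) (D.erase e) := by
  obtain ⟨hsub, hcard, hdisj⟩ := hD
  refine ⟨fun f hf => ?_, fun f hf => hcard f (mem_of_mem_erase hf),
    hdisj.mono (by simp)⟩
  obtain ⟨hfe, hf⟩ := mem_erase.mp hf
  exact subset_sdiff.mpr ⟨hsub f hf, hdisj hf he hfe⟩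

theorem IsMatchingOn.insert {S e : Finset α} {D : Finset (Finset α)}
    (hD : IsMatchingOn (S \ e) D) (heS : e ⊆ S) (he : #e = 2) :
    IsMatchingOn S (insert e D) := by
  obtain ⟨hsub, hcard, hdisj⟩ := hD
  have hdisj_e : ∀ f ∈ D, Disjoint e f := fun f hf => (subset_sdiff.mp (hsub f hf)).2.symm
  refine ⟨?_, ?_, ?_⟩
  · simpa [heS] using fun f hf => (hsub f hf).trans sdiff_subset
  · simpa [he] using hcard
  · rw [coe_insert, Set.pairwise_insert_of_symm]
    exact ⟨hdisj, fun f hf _ => hdisj_e f hf⟩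

theorem IsMatchingOn.notMem {S e : Finset α} {D : Finset (Finset α)}
    (hD : IsMatchingOn (S \ e) D) (he : e.Nonempty) : e ∉ D := fun heD =>
  he.ne_empty (disjoint_self.mp (subset_sdiff.mp (hD.1 e heD)).2)

theorem filter_not_exists_mem_matchings (S : Finset α) (a : α) :
    {D ∈ matchings S | ¬ ∃ e ∈ D, a ∈ e} = matchings (S.erase a) := by
  ext D
  simp only [mem_filter, mem_matchings, IsMatchingOn, subset_erase, not_exists, not_and]
  constructor
  · exact fun ⟨⟨hsub, hcard, hdisj⟩, ha⟩ =>
      ⟨fun e he => ⟨hsub e he, ha e he⟩, hcard, hdisj⟩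
  · exact fun ⟨hsub, hcard, hdisj⟩ =>
      ⟨⟨fun e he => (hsub e he).1, hcard, hdisj⟩, fun e he => (hsub e he).2⟩

theorem card_filter_mem_matchings {S e : Finset α} (heS : e ⊆ S) (he : #e = 2) :
    #{D ∈ matchings S | e ∈ D} = #(matchings (S \ e)) := by
  have he_ne : e.Nonempty := card_pos.mp (by omega)
  refine card_nbij' (·.erase e) (insert e) (fun D hD => ?_) (fun D hD => ?_)
    (fun D hD => insert_erase (mem_filter.mp hD).2) (fun D hD => ?_)
  · obtain ⟨hD, heD⟩ := mem_filter.mp hD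
    exact mem_matchings.mpr ((mem_matchings.mp hD).erase heD)
  · exact mem_filter.mpr
      ⟨mem_matchings.mpr ((mem_matchings.mp hD).insert heS he), mem_insert_self _ _⟩
  · exact erase_insert ((mem_matchings.mp hD).notMem he_ne)

theorem pair_subset_of_mem_erase {S : Finset α} {a b : α} (ha : a ∈ S) (hb : b ∈ S.erase a) :
    {a, b} ⊆ S :=
  insert_subset ha (singleton_subset_iff.mpr (mem_of_mem_erase hb))

theorem filter_exists_mem_matchings {S : Finset α} {a : α} :
    {D ∈ matchings S | ∃ e ∈ D, a ∈ e} =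
      (S.erase a).biUnion fun b => {D ∈ matchings S | {a, b} ∈ D} := by
  ext D
  simp only [mem_filter, mem_biUnion, mem_erase]
  constructor
  · rintro ⟨hD, e, heD, hae⟩
    obtain ⟨x, y, hxy, rfl⟩ := card_eq_two.mp ((mem_matchings.mp hD).2.1 _ heD)
    have hxyS := (mem_matchings.mp hD).1 _ heD
    rcases mem_insert.mp hae with rfl | hay
    · exact ⟨y, ⟨hxy.symm, hxyS (by simp)⟩, hD, heD⟩
    · obtain rfl := mem_singleton.mp hay
      rw [pair_comm] at heD
      exact ⟨x, ⟨hxy, hxyS (by simp)⟩, hD, heD⟩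
  · rintro ⟨b, -, hD, hab⟩
    exact ⟨hD, _, hab, mem_insert_self _ _⟩

theorem card_filter_exists_mem_matchings {S : Finset α} {a : α} (ha : a ∈ S) :
    #{D ∈ matchings S | ∃ e ∈ D, a ∈ e} =
      ∑ b ∈ S.erase a, #(matchings (S \ {a, b})) := by
  rw [filter_exists_mem_matchings, card_biUnion]
  · refine sum_congr rfl fun b hb => card_filter_mem_matchings ?_ ?_
    · exact pair_subset_of_mem_erase ha hb
    · exact card_pair (ne_of_mem_erase hb).symm
  · intro b hb b' hb' hbb'
    refine disjoint_filter.mpr fun D hD hab hab' => ?_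
    have hne : ({a, b} : Finset α) ≠ {a, b'} := fun h => by
      have : b ∈ ({a, b'} : Finset α) := h ▸ by simp
      simp [ne_of_mem_erase hb, hbb'] at this
    exact disjoint_left.mp ((mem_matchings.mp hD).2.2 hab hab' hne) (mem_insert_self a {b})
      (mem_insert_self a {b'})

theorem card_matchings : ∀ (n : ℕ) (S : Finset α), #S = n → #(matchings S) = telephone n
  | 0, S, hS | 1, S, hS => by rw [matchings_of_card_le_one (by omega)]; rfl
  | n + 2, S, hS => by
    obtain ⟨a, ha⟩ := card_pos.mp (show 0 < #S by omega)
    have hcover : ∀ b ∈ S.erase a, #(matchings (S \ {a, b})) = telephone n := fun b hb =>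
      card_matchings n _ <| by
        rw [card_sdiff_of_subset (pair_subset_of_mem_erase ha hb),
          card_pair (ne_of_mem_erase hb).symm, hS, Nat.add_sub_cancel]
    have hfree : #(matchings (S.erase a)) = telephone (n + 1) :=
      card_matchings (n + 1) _ (by rw [card_erase_of_mem ha, hS]; rfl)
    rw [← card_filter_add_card_filter_not (fun D => ∃ e ∈ D, a ∈ e),
      card_filter_exists_mem_matchings ha, filter_not_exists_mem_matchings, sum_congr rfl hcover,
      sum_const, card_erase_of_mem ha, hS, smul_eq_mul, hfree, telephone, add_comm]
    rfl

end Matchings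

def shiftLayout (d : ℕ) (s : List (ℕ × ℕ)) : List (ℕ × ℕ) :=
  s.map fun p => (p.1 + d, p.2)

theorem shiftLayout_injective (d : ℕ) : Function.Injective (shiftLayout d) :=
  List.map_injective_iff.mpr fun p q h => by simpa [Prod.ext_iff] using h

theorem isRSF_iff_pairwise {L : ℕ} {s : List (ℕ × ℕ)} :
    IsRSF L s ↔ (∀ p ∈ s, 1 ≤ p.1 ∧ 1 ≤ p.2 ∧ p.2 ≤ L - p.1) ∧
      s.Pairwise fun p q => p.1 + 2 ≤ q.1 := by
  have : Trans (fun p q : ℕ × ℕ => p.1 + 2 ≤ q.1) (fun p q : ℕ × ℕ => p.1 + 2 ≤ q.1)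
      (fun p q : ℕ × ℕ => p.1 + 2 ≤ q.1) := ⟨fun hpq hqr => by omega⟩
  exact and_congr_right' List.isChain_iff_pairwise

theorem isRSF_nil (L : ℕ) : IsRSF L [] :=
  isRSF_iff_pairwise.mpr ⟨by simp, List.Pairwise.nil⟩

theorem isRSF_cons {L k l : ℕ} {t : List (ℕ × ℕ)} :
    IsRSF L ((k, l) :: t) ↔
      (1 ≤ k ∧ 1 ≤ l ∧ l ≤ L - k) ∧ (∀ p ∈ t, k + 2 ≤ p.1) ∧ IsRSF L t := by
  simp only [isRSF_iff_pairwise, List.forall_mem_cons, List.pairwise_cons]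
  tauto

theorem IsRSF.eq_nil {L : ℕ} {s : List (ℕ × ℕ)} (hs : IsRSF L s) (hL : L ≤ 1) : s = [] :=
  List.eq_nil_iff_forall_not_mem.mpr fun p hp => by
    have := hs.1 p hp
    omega

theorem IsRSF.shift {L : ℕ} {s : List (ℕ × ℕ)} (hs : IsRSF L s) (d : ℕ) :
    IsRSF (L + d) (shiftLayout d s) := by
  rw [isRSF_iff_pairwise] at hs ⊢
  simp only [shiftLayout, List.forall_mem_map, List.pairwise_map]
  exact ⟨fun p hp => by have := hs.1 p hp; omega, hs.2.imp fun h => by omega⟩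

theorem IsRSF.exists_shiftLayout_eq {L d : ℕ} {s : List (ℕ × ℕ)} (hs : IsRSF (L + d) s)
    (hd : ∀ p ∈ s, d < p.1) : ∃ t, IsRSF L t ∧ shiftLayout d t = s := by
  refine ⟨s.map fun p => (p.1 - d, p.2), ?_, ?_⟩
  · rw [isRSF_iff_pairwise] at hs ⊢
    simp only [List.forall_mem_map, List.pairwise_map]
    refine ⟨fun p hp => ?_, hs.2.imp_of_mem fun hp _ h => ?_⟩
    · have := hs.1 p hp
      have := hd p hp
      omega
    · have := hd _ hp
      omega
  · rw [shiftLayout, List.map_map]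
    refine (List.map_congr_left fun p hp => ?_).trans (List.map_id s)
    exact Prod.ext (Nat.sub_add_cancel (hd p hp).le) rfl

def layoutOfSum (L : ℕ) :
    {s // IsRSF (L + 1) s} ⊕ Fin (L + 1) × {s // IsRSF L s} → {s // IsRSF (L + 2) s}
  | .inl s => ⟨shiftLayout 1 s, s.2.shift 1⟩
  | .inr (j, t) => ⟨(1, (j : ℕ) + 1) :: shiftLayout 2 t, isRSF_cons.mpr
      ⟨by omega, List.forall_mem_map.mpr fun p hp => by have := t.2.1 p hp; omega,
        t.2.shift 2⟩⟩

theorem layoutOfSum_bijective (L : ℕ) : Function.Bijective (layoutOfSum L) := by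
  refine ⟨?_, ?_⟩
  · have head_ne : ∀ (j : Fin (L + 1)) (s : {s // IsRSF (L + 1) s}) (t : List (ℕ × ℕ)),
        shiftLayout 1 s ≠ (1, (j : ℕ) + 1) :: t := fun j s t h => by
      have hmem : (1, (j : ℕ) + 1) ∈ shiftLayout 1 s := h ▸ List.mem_cons_self
      obtain ⟨p, hp, hp1⟩ := List.mem_map.mp hmem
      have := s.2.1 p hp
      simp only [Prod.ext_iff] at hp1
      omega
    rintro (s | ⟨j, t⟩) (s' | ⟨j', t'⟩) h <;> simp only [layoutOfSum, Subtype.mk.injEq] at h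
    · exact congrArg Sum.inl (Subtype.ext (shiftLayout_injective 1 h))
    · exact absurd h (head_ne j' s _)
    · exact absurd h.symm (head_ne j s' _)
    · obtain ⟨hj, ht⟩ := List.cons.inj h
      simp only [Prod.mk.injEq, add_left_inj, true_and] at hj
      rw [Fin.ext hj, Subtype.ext (shiftLayout_injective 2 ht)]
  · rintro ⟨_ | ⟨⟨k, l⟩, t⟩, hs⟩
    · exact ⟨.inl ⟨[], isRSF_nil _⟩, rfl⟩
    obtain ⟨⟨hk, hl, hlL⟩, hkt, ht⟩ := isRSF_cons.mp hs
    rcases hk.eq_or_lt with rfl | hk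
    · obtain ⟨t', ht', rfl⟩ :=
        ht.exists_shiftLayout_eq (L := L) (d := 2) fun p hp => by have := hkt p hp; omega
      refine ⟨.inr (⟨l - 1, by omega⟩, ⟨t', ht'⟩), ?_⟩
      simp only [layoutOfSum, Subtype.mk.injEq, List.cons.injEq, Prod.mk.injEq, true_and, and_true]
      omega
    · obtain ⟨s', hs', hs's⟩ := hs.exists_shiftLayout_eq (L := L + 1) (d := 1) fun p hp => by
        rcases List.mem_cons.mp hp with rfl | hp
        · exact hk
        · have := hkt p hp
          omega
      exact ⟨.inl ⟨s', hs'⟩, Subtype.ext hs's⟩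

theorem card_layouts : ∀ L, Nat.card {s // IsRSF L s} = telephone L
  | 0 | 1 => Nat.card_eq_one_iff_unique.mpr
      ⟨⟨fun s t => Subtype.ext ((s.2.eq_nil (by omega)).trans (t.2.eq_nil (by omega)).symm)⟩,
        ⟨⟨[], isRSF_nil _⟩⟩⟩
  | L + 2 => by
    have := finite_of_card_eq_telephone (card_layouts L)
    have := finite_of_card_eq_telephone (card_layouts (L + 1))
    rw [← Nat.card_congr (Equiv.ofBijective _ (layoutOfSum_bijective L)), Nat.card_sum,
      Nat.card_prod, Nat.card_fin, card_layouts, card_layouts, telephone]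

theorem isPartialMatching_iff_mem_matchings {L : ℕ} {D : Finset (Finset ℕ)} :
    IsPartialMatching L D ↔ D ∈ matchings (Icc 1 L) := by
  rw [mem_matchings, IsPartialMatching, IsMatchingOn]
  tauto

/-- The number of RSF layouts on `L` qubits equals the telephone number `T L`;
that is, there is a bijection between RSF layouts on `L` qubits and partial
matchings of `{1,…,L}`. -/
theorem numRSF_eq_telephone (L : ℕ) :
    numRSF L = telephone L ∧
      Nonempty ({s : List (ℕ × ℕ) // IsRSF L s} ≃
        {D : Finset (Finset ℕ) // IsPartialMatching L D}) := by
  have hrsf : numRSF L = telephone L := card_layouts L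
  have hmatch : Nat.card {D // IsPartialMatching L D} = telephone L := by
    rw [Nat.card_congr (Equiv.subtypeEquivRight fun D => isPartialMatching_iff_mem_matchings),
      Nat.card_eq_finsetCard]
    exact card_matchings L _ (by simp)
  have := finite_of_card_eq_telephone hrsf
  have := finite_of_card_eq_telephone hmatch
  exact ⟨hrsf, Finite.card_eq.mp (hrsf.trans hmatch.symm)⟩
end

section
/- Let ψ ∈ ℂ⁸ be a unit vector supported on the even-parity computational basis states of three qubits, i.e., its coordinates at indices 1, 2, 4, 7 (binary 001, 010, 100, 111) vanish, so ψ = α'|000⟩ + β'|011⟩ + γ'|110⟩ + δ'|101⟩. Then there exist matchgates U and V such that ψ = (I₂ ⊗ U)·(V ⊗ I₂)·e₀, and likewise there exist matchgates U' and V' such that ψ = (U' ⊗ I₂)·(I₂ ⊗ V')·e₀. (Every even-parity three-qubit state can be generated from |000⟩ by two matchgates, in either order of the bonds.) -/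
open Kronecker

/-- A matchgate: a 4×4 unitary `G(A,B)` built from 2×2 unitaries `A`, `B` with
`det A = det B`, where `A` acts on the even-parity subspace span{|00⟩,|11⟩} and
`B` on the odd-parity subspace span{|01⟩,|10⟩}. -/
def IsMatchgate (G : Matrix (Fin 4) (Fin 4) ℂ) : Prop :=
  ∃ A B : Matrix (Fin 2) (Fin 2) ℂ,
    A ∈ Matrix.unitaryGroup (Fin 2) ℂ ∧ B ∈ Matrix.unitaryGroup (Fin 2) ℂ ∧
    A.det = B.det ∧
    G = !![A 0 0, 0,     0,     A 0 1;
           0,     B 0 0, B 0 1, 0;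
           0,     B 1 0, B 1 1, 0;
           A 1 0, 0,     0,     A 1 1]

/-- A two-qubit gate applied to qubits (1,2) of three qubits (lexicographic ordering). -/
noncomputable def gate12 (U : Matrix (Fin 4) (Fin 4) ℂ) : Matrix (Fin 8) (Fin 8) ℂ :=
  (Matrix.reindex (finProdFinEquiv.trans (finCongr (by norm_num)))
      (finProdFinEquiv.trans (finCongr (by norm_num))))
    (U ⊗ₖ (1 : Matrix (Fin 2) (Fin 2) ℂ))

/-- A two-qubit gate applied to qubits (2,3) of three qubits (lexicographic ordering). -/
noncomputable def gate23 (U : Matrix (Fin 4) (Fin 4) ℂ) : Matrix (Fin 8) (Fin 8) ℂ :=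
  (Matrix.reindex (finProdFinEquiv.trans (finCongr (by norm_num)))
      (finProdFinEquiv.trans (finCongr (by norm_num))))
    ((1 : Matrix (Fin 2) (Fin 2) ℂ) ⊗ₖ U)

/-- The state |000⟩ of three qubits. -/
def e0 : Fin 8 → ℂ := fun i => if i = 0 then 1 else 0

/-!
Starting from |000⟩, the first matchgate only sees |00⟩ on its bond and produces
c|000⟩ + s|110⟩ (resp. c|000⟩ + s|011⟩), where (c, s) is the first column of its even block.
The second matchgate then moves the two branches independently: one through its even block,
the other through its odd block. So take (c, s) = (‖(ψ₀, ψ₃)‖, ‖(ψ₅, ψ₆)‖)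
(resp. (‖(ψ₀, ψ₆)‖, ‖(ψ₃, ψ₅)‖)) and blocks in SU(2) whose relevant columns are the normalized
pairs; every unit vector of ℂ² is a column of an SU(2) matrix, and determinant 1 on both
blocks makes the condition det A = det B automatic.
-/

open ComplexConjugate Matrix

lemma gate12_eq (V : Matrix (Fin 4) (Fin 4) ℂ) : gate12 V =
    !![V 0 0, 0, V 0 1, 0, V 0 2, 0, V 0 3, 0;
       0, V 0 0, 0, V 0 1, 0, V 0 2, 0, V 0 3;
       V 1 0, 0, V 1 1, 0, V 1 2, 0, V 1 3, 0;
       0, V 1 0, 0, V 1 1, 0, V 1 2, 0, V 1 3;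
       V 2 0, 0, V 2 1, 0, V 2 2, 0, V 2 3, 0;
       0, V 2 0, 0, V 2 1, 0, V 2 2, 0, V 2 3;
       V 3 0, 0, V 3 1, 0, V 3 2, 0, V 3 3, 0;
       0, V 3 0, 0, V 3 1, 0, V 3 2, 0, V 3 3] := by
  ext i j
  fin_cases i <;> fin_cases j <;> simp +decide [gate12, one_apply] <;> rfl

lemma gate23_eq (U : Matrix (Fin 4) (Fin 4) ℂ) : gate23 U =
    !![U 0 0, U 0 1, U 0 2, U 0 3, 0, 0, 0, 0;
       U 1 0, U 1 1, U 1 2, U 1 3, 0, 0, 0, 0;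
       U 2 0, U 2 1, U 2 2, U 2 3, 0, 0, 0, 0;
       U 3 0, U 3 1, U 3 2, U 3 3, 0, 0, 0, 0;
       0, 0, 0, 0, U 0 0, U 0 1, U 0 2, U 0 3;
       0, 0, 0, 0, U 1 0, U 1 1, U 1 2, U 1 3;
       0, 0, 0, 0, U 2 0, U 2 1, U 2 2, U 2 3;
       0, 0, 0, 0, U 3 0, U 3 1, U 3 2, U 3 3] := by
  ext i j
  fin_cases i <;> fin_cases j <;> simp +decide [gate23, one_apply] <;> rfl

def matchgate (A B : Matrix (Fin 2) (Fin 2) ℂ) : Matrix (Fin 4) (Fin 4) ℂ :=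
  !![A 0 0, 0,     0,     A 0 1;
     0,     B 0 0, B 0 1, 0;
     0,     B 1 0, B 1 1, 0;
     A 1 0, 0,     0,     A 1 1]

lemma isMatchgate_matchgate {A B : Matrix (Fin 2) (Fin 2) ℂ}
    (hA : A ∈ specialUnitaryGroup (Fin 2) ℂ) (hB : B ∈ specialUnitaryGroup (Fin 2) ℂ) :
    IsMatchgate (matchgate A B) := by
  rw [mem_specialUnitaryGroup_iff] at hA hB
  exact ⟨A, B, hA.1, hB.1, hA.2.trans hB.2.symm, rfl⟩

lemma e0_eq_single : e0 = Pi.single 0 1 := by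
  ext i; simp [e0, Pi.single_apply]

lemma gate23_mul_gate12_mulVec_e0 (A B A' B' : Matrix (Fin 2) (Fin 2) ℂ) :
    (gate23 (matchgate A B) * gate12 (matchgate A' B')) *ᵥ e0 =
      ![A' 0 0 * A 0 0, 0, 0, A' 0 0 * A 1 0, 0, A' 1 0 * B 0 1, A' 1 0 * B 1 1, 0] := by
  rw [e0_eq_single, mulVec_single_one, gate12_eq, gate23_eq]
  ext i
  fin_cases i <;> simp [matchgate, mul_comm]

lemma gate12_mul_gate23_mulVec_e0 (A B A' B' : Matrix (Fin 2) (Fin 2) ℂ) :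
    (gate12 (matchgate A B) * gate23 (matchgate A' B')) *ᵥ e0 =
      ![A' 0 0 * A 0 0, 0, 0, A' 1 0 * B 0 0, 0, A' 1 0 * B 1 0, A' 0 0 * A 1 0, 0] := by
  rw [e0_eq_single, mulVec_single_one, gate12_eq, gate23_eq]
  ext i
  fin_cases i <;> simp [matchgate, mul_comm]

lemma mem_specialUnitaryGroup_fin_two {x y : ℂ} (h : ‖x‖ ^ 2 + ‖y‖ ^ 2 = 1) :
    !![x, -conj y; y, conj x] ∈ specialUnitaryGroup (Fin 2) ℂ := by
  have hxy : x * conj x + y * conj y = 1 := by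
    simp only [Complex.mul_conj, Complex.normSq_eq_norm_sq]
    exact_mod_cast h
  refine mem_specialUnitaryGroup_iff.2 ⟨mem_unitaryGroup_iff.2 ?_, ?_⟩
  · ext i j
    fin_cases i <;> fin_cases j <;> simp [mul_apply, Fin.sum_univ_two]
    · linear_combination hxy
    · ring
    · ring
    · linear_combination hxy
  · rw [det_fin_two_of]
    linear_combination hxy

lemma exists_mem_specialUnitaryGroup_col {x y : ℂ} (h : ‖x‖ ^ 2 + ‖y‖ ^ 2 = 1) (j : Fin 2) :
    ∃ A ∈ specialUnitaryGroup (Fin 2) ℂ, A 0 j = x ∧ A 1 j = y := by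
  fin_cases j
  · exact ⟨_, mem_specialUnitaryGroup_fin_two h, rfl, rfl⟩
  · refine ⟨_, mem_specialUnitaryGroup_fin_two (x := conj y) (y := -conj x) ?_, ?_, ?_⟩
    · simpa [add_comm] using h
    · simp
    · simp

lemma exists_eq_sqrt_mul (p q : ℂ) : ∃ x y : ℂ, ‖x‖ ^ 2 + ‖y‖ ^ 2 = 1 ∧
    p = √(‖p‖ ^ 2 + ‖q‖ ^ 2) * x ∧ q = √(‖p‖ ^ 2 + ‖q‖ ^ 2) * y := by
  set r := √(‖p‖ ^ 2 + ‖q‖ ^ 2)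
  have hr : r ^ 2 = ‖p‖ ^ 2 + ‖q‖ ^ 2 := Real.sq_sqrt (by positivity)
  rcases eq_or_ne r 0 with hr0 | hr0
  · have hp : p = 0 := by simpa using (by nlinarith [sq_nonneg ‖q‖] : ‖p‖ ^ 2 = 0)
    have hq : q = 0 := by simpa using (by nlinarith [sq_nonneg ‖p‖] : ‖q‖ ^ 2 = 0)
    exact ⟨1, 0, by simp, by simp [hp, hr0], by simp [hq, hr0]⟩
  · have hrC : (r : ℂ) ≠ 0 := by exact_mod_cast hr0
    refine ⟨p / r, q / r, ?_, by field_simp, by field_simp⟩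
    rw [norm_div, norm_div, Complex.norm_real, Real.norm_of_nonneg (Real.sqrt_nonneg _), div_pow,
      div_pow, ← add_div, Real.sq_sqrt (by positivity), div_self (hr ▸ pow_ne_zero 2 hr0)]

lemma exists_matchgates_of_amplitudes {p₀ p₁ q₀ q₁ : ℂ}
    (h : ‖p₀‖ ^ 2 + ‖p₁‖ ^ 2 + ‖q₀‖ ^ 2 + ‖q₁‖ ^ 2 = 1) (j : Fin 2) :
    ∃ A B C : Matrix (Fin 2) (Fin 2) ℂ, IsMatchgate (matchgate A B) ∧ IsMatchgate (matchgate C C) ∧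
      C 0 0 * A 0 0 = p₀ ∧ C 0 0 * A 1 0 = p₁ ∧ C 1 0 * B 0 j = q₀ ∧ C 1 0 * B 1 j = q₁ := by
  obtain ⟨x₀, x₁, hx, hp₀, hp₁⟩ := exists_eq_sqrt_mul p₀ p₁
  obtain ⟨y₀, y₁, hy, hq₀, hq₁⟩ := exists_eq_sqrt_mul q₀ q₁
  have hrs : ‖(√(‖p₀‖ ^ 2 + ‖p₁‖ ^ 2) : ℂ)‖ ^ 2 + ‖(√(‖q₀‖ ^ 2 + ‖q₁‖ ^ 2) : ℂ)‖ ^ 2 = 1 := by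
    simp only [Complex.norm_real, Real.norm_eq_abs, sq_abs]
    rw [Real.sq_sqrt (by positivity), Real.sq_sqrt (by positivity), ← h]
    ring
  obtain ⟨A, hA, hA₀, hA₁⟩ := exists_mem_specialUnitaryGroup_col hx 0
  obtain ⟨B, hB, hB₀, hB₁⟩ := exists_mem_specialUnitaryGroup_col hy j
  obtain ⟨C, hC, hC₀, hC₁⟩ := exists_mem_specialUnitaryGroup_col hrs 0
  refine ⟨A, B, C, isMatchgate_matchgate hA hB, isMatchgate_matchgate hC hC, ?_, ?_, ?_, ?_⟩ <;>
    simp only [hA₀, hA₁, hB₀, hB₁, hC₀, hC₁, ← hp₀, ← hp₁, ← hq₀, ← hq₁]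

/-- Every even-parity three-qubit unit vector (vanishing coordinates at the
odd-parity indices 1 = 001, 2 = 010, 4 = 100, 7 = 111) can be generated from
|000⟩ by two matchgates, in either order of the two bonds. -/
theorem even_parity_state_two_matchgates (ψ : Fin 8 → ℂ)
    (hnorm : ∑ i, ‖ψ i‖ ^ 2 = 1)
    (h1 : ψ 1 = 0) (h2 : ψ 2 = 0) (h4 : ψ 4 = 0) (h7 : ψ 7 = 0) :
    (∃ U V : Matrix (Fin 4) (Fin 4) ℂ, IsMatchgate U ∧ IsMatchgate V ∧
      ψ = (gate23 U * gate12 V).mulVec e0) ∧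
    (∃ U' V' : Matrix (Fin 4) (Fin 4) ℂ, IsMatchgate U' ∧ IsMatchgate V' ∧
      ψ = (gate12 U' * gate23 V').mulVec e0) := by
  have hsum : ‖ψ 0‖ ^ 2 + ‖ψ 3‖ ^ 2 + ‖ψ 5‖ ^ 2 + ‖ψ 6‖ ^ 2 = 1 := by
    rw [← hnorm, Fin.sum_univ_eight, h1, h2, h4, h7]
    simp
  constructor
  · obtain ⟨A, B, C, hAB, hC, h0, h3, h5, h6⟩ := exists_matchgates_of_amplitudes hsum 1
    refine ⟨_, _, hAB, hC, ?_⟩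
    rw [gate23_mul_gate12_mulVec_e0]
    ext i
    fin_cases i <;> simp [*]
  · obtain ⟨A, B, C, hAB, hC, h0, h6, h3, h5⟩ :=
      exists_matchgates_of_amplitudes (p₀ := ψ 0) (p₁ := ψ 6) (q₀ := ψ 3) (q₁ := ψ 5)
        (by linear_combination hsum) 0
    refine ⟨_, _, hAB, hC, ?_⟩
    rw [gate12_mul_gate23_mulVec_e0]
    ext i
    fin_cases i <;> simp [*]
end
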